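/- arXiv:2402.10299 — 5 statements merged into one kernel-verified Lean document; each statement's English description precedes it below -/
import Mathlib

section
/- Let h : [1/2, 1) → ℝ be locally Lipschitz and suppose that for almost every t ∈ (1/2, 1) its derivative satisfies h'(t) ≥ −4π(t − 1/2) − (3(2t−1)/(t(1−t)))·h(t) + 6·∫_{1/2}^{t} h(s)/(s(1−s)) ds. Set a₀ = 1/4 − h(1/2)/π. Then for every t ∈ (1/2, 1): (1/2)t² − (1/3)t³ − 1/12 − (1/(4π))·∫_{1/2}^{t} h(s)/(s(1−s)) ds ≤ (2a₀/3)(3t² − 3t + 1) − (4a₀/3)(1−t)³. -/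
/-!
Write `H t = ∫_{1/2}^t h s / (s (1 - s))` and let `Φ` be the same primitive for the solution of
the equality case with the same value at `1/2`. The claim is `W = H - Φ ≥ 0`. With
`M = (h - t (1 - t) Φ') / (t (1 - t))³` one has `W' = (t (1 - t))² M`, and since `(t (1 - t))⁻³`
is an integrating factor for the term `-3 (2t - 1) / (t (1 - t)) · h`, the hypothesis becomes
`M' ≥ 6 W / (t (1 - t))³` a.e.; `M` is absolutely continuous, so this can be integrated. As
`W (1/2) = M (1/2) = 0` and both coefficients are nonnegative, Picard iteration of this coupled
pair of integral inequalities forces `W ≥ 0`.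
-/

open MeasureTheory Set Filter intervalIntegral
open scoped Nat

theorem AbsolutelyContinuousOnInterval.integral_le_sub_of_le_deriv {f g : ℝ → ℝ} {a b : ℝ}
    (hab : a ≤ b) (hf : AbsolutelyContinuousOnInterval f a b)
    (hg : IntervalIntegrable g volume a b) (hgf : ∀ᵐ x, x ∈ Ioc a b → g x ≤ deriv f x) :
    ∫ x in a..b, g x ≤ f b - f a := by
  rw [← hf.integral_deriv_eq_sub, integral_of_le hab, integral_of_le hab]
  exact setIntegral_mono_on_ae hg.1 hf.intervalIntegrable_deriv.1 measurableSet_Ioc hgf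

theorem neg_pow_div_factorial_le_integral {a t C K : ℝ} {c f : ℝ → ℝ} (n : ℕ) (hat : a ≤ t)
    (hC : 0 ≤ C) (hK : 0 ≤ K) (hcf : IntervalIntegrable (fun s ↦ c s * f s) volume a t)
    (hc : ∀ s ∈ Icc a t, 0 ≤ c s ∧ c s ≤ C)
    (hf : ∀ s ∈ Icc a t, -(K * (C * (s - a)) ^ n / n !) ≤ f s) :
    -(K * (C * (t - a)) ^ (n + 1) / (n + 1)!) ≤ ∫ s in a..t, c s * f s := by
  have hprim : ∀ s ∈ uIcc a t, HasDerivAt (fun s ↦ -(K * (C * (s - a)) ^ (n + 1) / (n + 1)!))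
      (-(C * (K * (C * (s - a)) ^ n / n !))) s := by
    intro s _
    have := ((((hasDerivAt_id' s).sub_const a).const_mul C).fun_pow (n + 1)).const_mul K
    refine (this.div_const ((n + 1)! : ℝ)).neg.congr_deriv ?_
    rw [Nat.factorial_succ]; push_cast; field_simp
  calc -(K * (C * (t - a)) ^ (n + 1) / (n + 1)!)
      = ∫ s in a..t, -(C * (K * (C * (s - a)) ^ n / n !)) := by
        rw [integral_eq_sub_of_hasDerivAt hprim (by apply Continuous.intervalIntegrable; fun_prop)]
        simp
    _ ≤ ∫ s in a..t, c s * f s := by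
        refine integral_mono_on hat (by apply Continuous.intervalIntegrable; fun_prop) hcf ?_
        intro s hs
        have hX : 0 ≤ K * (C * (s - a)) ^ n / n ! := by
          have := hs.1; positivity
        nlinarith [hc s hs, hf s hs]

theorem nonneg_of_coupled_le_integral {a b : ℝ} {w m c₁ c₂ : ℝ → ℝ}
    (hw : ContinuousOn w (Icc a b)) (hm : ContinuousOn m (Icc a b))
    (hc₁ : ContinuousOn c₁ (Icc a b)) (hc₂ : ContinuousOn c₂ (Icc a b))
    (hc₁_nonneg : ∀ s ∈ Icc a b, 0 ≤ c₁ s) (hc₂_nonneg : ∀ s ∈ Icc a b, 0 ≤ c₂ s)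
    (hwm : ∀ t ∈ Icc a b, ∫ s in a..t, c₁ s * m s ≤ w t)
    (hmw : ∀ t ∈ Icc a b, ∫ s in a..t, c₂ s * w s ≤ m t) :
    ∀ t ∈ Icc a b, 0 ≤ w t ∧ 0 ≤ m t := by
  intro t ht
  -- the lower bounds `-K (C (t - a))ⁿ / n!` on `w` and `m` feed each other through the integrals
  obtain ⟨Kw, hKw⟩ := isCompact_Icc.exists_bound_of_continuousOn hw
  obtain ⟨Km, hKm⟩ := isCompact_Icc.exists_bound_of_continuousOn hm
  obtain ⟨C₁, hC₁⟩ := isCompact_Icc.exists_bound_of_continuousOn hc₁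
  obtain ⟨C₂, hC₂⟩ := isCompact_Icc.exists_bound_of_continuousOn hc₂
  set K := max Kw Km
  set C := max C₁ C₂
  have hK : 0 ≤ K := (norm_nonneg _).trans ((hKw t ht).trans (le_max_left _ _))
  have hC : 0 ≤ C := (norm_nonneg _).trans ((hC₁ t ht).trans (le_max_left _ _))
  have hc_le {c : ℝ → ℝ} {C' : ℝ} (hcC' : ∀ s ∈ Icc a b, ‖c s‖ ≤ C') (hC' : C' ≤ C) :
      ∀ s ∈ Icc a b, c s ≤ C := fun s hs ↦ (le_abs_self _).trans ((hcC' s hs).trans hC')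
  have hint {c f : ℝ → ℝ} (hc : ContinuousOn c (Icc a b)) (hf : ContinuousOn f (Icc a b))
      {s : ℝ} (hs : s ∈ Icc a b) : IntervalIntegrable (fun r ↦ c r * f r) volume a s :=
    ((hc.mul hf).mono (uIcc_of_le hs.1 ▸ Icc_subset_Icc_right hs.2)).intervalIntegrable
  have hbound (n : ℕ) : ∀ s ∈ Icc a b,
      -(K * (C * (s - a)) ^ n / n !) ≤ w s ∧ -(K * (C * (s - a)) ^ n / n !) ≤ m s := by
    induction n with
    | zero =>
      intro s hs
      simp only [pow_zero, Nat.factorial_zero, Nat.cast_one, div_one, mul_one, neg_le]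
      exact ⟨(neg_le_abs _).trans ((hKw s hs).trans (le_max_left _ _)),
        (neg_le_abs _).trans ((hKm s hs).trans (le_max_right _ _))⟩
    | succ n ih =>
      intro s hs
      have hsub : Icc a s ⊆ Icc a b := Icc_subset_Icc_right hs.2
      exact ⟨(neg_pow_div_factorial_le_integral n hs.1 hC hK (hint hc₁ hm hs)
          (fun r hr ↦ ⟨hc₁_nonneg r (hsub hr), hc_le hC₁ (le_max_left _ _) r (hsub hr)⟩)
          (fun r hr ↦ (ih r (hsub hr)).2)).trans (hwm s hs),
        (neg_pow_div_factorial_le_integral n hs.1 hC hK (hint hc₂ hw hs)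
          (fun r hr ↦ ⟨hc₂_nonneg r (hsub hr), hc_le hC₂ (le_max_right _ _) r (hsub hr)⟩)
          (fun r hr ↦ (ih r (hsub hr)).1)).trans (hmw s hs)⟩
  have hlim : Tendsto (fun n : ℕ ↦ -(K * (C * (t - a)) ^ n / n !)) atTop (nhds 0) := by
    simpa [mul_div_assoc] using
      ((FloorSemiring.tendsto_pow_div_factorial_atTop (C * (t - a))).const_mul K).neg
  exact ⟨le_of_tendsto hlim (Eventually.of_forall fun n ↦ (hbound n t ht).1),
    le_of_tendsto hlim (Eventually.of_forall fun n ↦ (hbound n t ht).2)⟩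

namespace VolumeComparison

/-- `ĥ t = t (1 - t) * comparisonDeriv P h₀ t` satisfies the differential inequality (with `4π`
replaced by `4P`) with equality and `ĥ (1/2) = h₀`, and
`comparison P h₀ t = ∫_{1/2}^t ĥ s / (s (1 - s))`. -/
noncomputable def comparison (P h₀ t : ℝ) : ℝ :=
  4 * P * (t ^ 2 / 2 - t ^ 3 / 3 - 1 / 12)
    - 2 / 3 * (P - 4 * h₀) * (2 * t ^ 3 - 3 * t ^ 2 + 3 * t - 1)

noncomputable def comparisonDeriv (P h₀ t : ℝ) : ℝ :=
  4 * P * (t - t ^ 2) - 2 * (P - 4 * h₀) * (2 * t ^ 2 - 2 * t + 1)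

noncomputable def comparisonDeriv2 (P h₀ t : ℝ) : ℝ :=
  4 * P * (1 - 2 * t) - 2 * (P - 4 * h₀) * (4 * t - 2)

theorem hasDerivAt_comparison (P h₀ t : ℝ) :
    HasDerivAt (comparison P h₀) (comparisonDeriv P h₀ t) t := by
  have h1 := hasDerivAt_id' t
  have h2 := h1.fun_pow 2
  have h3 := h1.fun_pow 3
  refine ((((h2.div_const 2).sub (h3.div_const 3)).sub_const _).const_mul _).sub
    (((((h3.const_mul 2).sub (h2.const_mul 3)).add (h1.const_mul 3)).sub_const 1).const_mul _)
    |>.congr_deriv ?_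
  unfold comparisonDeriv; push_cast; ring

theorem hasDerivAt_comparisonDeriv (P h₀ t : ℝ) :
    HasDerivAt (comparisonDeriv P h₀) (comparisonDeriv2 P h₀ t) t := by
  have h1 := hasDerivAt_id' t
  have h2 := h1.fun_pow 2
  refine ((h1.sub h2).const_mul _).sub
    ((((h2.const_mul 2).sub (h1.const_mul 2)).add_const 1).const_mul _) |>.congr_deriv ?_
  unfold comparisonDeriv2; push_cast; ring

theorem continuous_comparisonDeriv (P h₀ : ℝ) : Continuous (comparisonDeriv P h₀) := by
  unfold comparisonDeriv; fun_prop

theorem comparison_half (P h₀ : ℝ) : comparison P h₀ (1 / 2) = 0 := by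
  unfold comparison; ring

noncomputable def primitive (h : ℝ → ℝ) (t : ℝ) : ℝ :=
  ∫ s in (1 / 2 : ℝ)..t, h s / (s * (1 - s))

noncomputable def excess (P : ℝ) (h : ℝ → ℝ) (t : ℝ) : ℝ :=
  primitive h t - comparison P (h (1 / 2)) t

noncomputable def excessSlope (P : ℝ) (h : ℝ → ℝ) (t : ℝ) : ℝ :=
  h t / (t * (1 - t)) ^ 3 - comparisonDeriv P (h (1 / 2)) t / (t * (1 - t)) ^ 2

variable {P : ℝ} {h : ℝ → ℝ}

theorem excessSlope_half : excessSlope P h (1 / 2) = 0 := by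
  unfold excessSlope comparisonDeriv; ring

theorem mul_one_sub_pos_of_mem_Icc {b s : ℝ} (hb : b < 1) (hs : s ∈ Icc (1 / 2 : ℝ) b) :
    0 < s * (1 - s) :=
  mul_pos (by linarith [hs.1]) (by linarith [hs.2])

theorem continuousOn_integrand {b : ℝ} (hb : b < 1) (hh : ContinuousOn h (Icc (1 / 2) b)) :
    ContinuousOn (fun s ↦ h s / (s * (1 - s))) (Icc (1 / 2) b) :=
  hh.div (by fun_prop) fun _ hs ↦ (mul_one_sub_pos_of_mem_Icc hb hs).ne'

theorem continuousOn_excess {b : ℝ} (hb₀ : 1 / 2 ≤ b) (hb : b < 1)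
    (hh : ContinuousOn h (Icc (1 / 2) b)) :
    ContinuousOn (excess P h) (Icc (1 / 2) b) := by
  have := continuousOn_primitive_interval
    (uIcc_of_le hb₀ ▸ (continuousOn_integrand hb hh).integrableOn_Icc (μ := volume))
  rw [uIcc_of_le hb₀] at this
  exact this.sub (by unfold comparison; fun_prop)

theorem continuousOn_excessSlope {b : ℝ} (hb : b < 1) (hh : ContinuousOn h (Icc (1 / 2) b)) :
    ContinuousOn (excessSlope P h) (Icc (1 / 2) b) := by
  have hne {n : ℕ} : ∀ s ∈ Icc (1 / 2 : ℝ) b, (s * (1 - s)) ^ n ≠ 0 := fun _ hs ↦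
    (pow_pos (mul_one_sub_pos_of_mem_Icc hb hs) n).ne'
  exact (hh.div (by fun_prop) hne).sub
    ((continuous_comparisonDeriv _ _).continuousOn.div (by fun_prop) hne)

theorem absolutelyContinuousOnInterval_excessSlope {b : ℝ} {L : NNReal} (hb₀ : 1 / 2 ≤ b)
    (hb : b < 1) (hh : LipschitzOnWith L h (Icc (1 / 2) b)) :
    AbsolutelyContinuousOnInterval (excessSlope P h) (1 / 2) b := by
  have hne {n : ℕ} : ∀ s ∈ uIcc (1 / 2 : ℝ) b, (s * (1 - s)) ^ n ≠ 0 := fun _ hs ↦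
    (pow_pos (mul_one_sub_pos_of_mem_Icc hb (uIcc_of_le hb₀ ▸ hs)) n).ne'
  have hq : ContDiffOn ℝ 1 (fun s : ℝ ↦ ((s * (1 - s)) ^ 3)⁻¹) (uIcc (1 / 2) b) :=
    ContDiffOn.inv (by fun_prop) hne
  have hr : ContDiffOn ℝ 1 (fun s ↦ comparisonDeriv P (h (1 / 2)) s / (s * (1 - s)) ^ 2)
      (uIcc (1 / 2) b) :=
    ContDiffOn.div (by unfold comparisonDeriv; fun_prop) (by fun_prop) hne
  have hM : excessSlope P h = fun s ↦
      h s * ((s * (1 - s)) ^ 3)⁻¹ - comparisonDeriv P (h (1 / 2)) s / (s * (1 - s)) ^ 2 := by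
    funext s; rw [excessSlope, div_eq_mul_inv]
  rw [hM]
  exact ((uIcc_of_le hb₀ ▸ hh).absolutelyContinuousOnInterval.fun_mul
    hq.absolutelyContinuousOnInterval).fun_sub hr.absolutelyContinuousOnInterval

theorem excess_eq_integral {t : ℝ} (ht₀ : 1 / 2 ≤ t) (ht : t < 1)
    (hh : ContinuousOn h (Icc (1 / 2) t)) :
    excess P h t = ∫ s in (1 / 2)..t, (s * (1 - s)) ^ 2 * excessSlope P h s := by
  have hΦ := continuous_comparisonDeriv P (h (1 / 2))
  have hcomp :
      comparison P (h (1 / 2)) t = ∫ s in (1 / 2)..t, comparisonDeriv P (h (1 / 2)) s := by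
    rw [integral_eq_sub_of_hasDerivAt (fun s _ ↦ hasDerivAt_comparison _ _ s)
      (hΦ.intervalIntegrable _ _), comparison_half, sub_zero]
  have hint : IntervalIntegrable (fun s ↦ h s / (s * (1 - s))) volume (1 / 2) t :=
    (continuousOn_integrand ht hh).intervalIntegrable_of_Icc ht₀
  rw [excess, primitive, hcomp, ← integral_sub hint (hΦ.intervalIntegrable _ _)]
  refine integral_congr fun s hs ↦ ?_
  have hs' := uIcc_of_le ht₀ ▸ hs
  have : s ≠ 0 := by linarith [hs'.1]
  have : 1 - s ≠ 0 := by linarith [hs'.2]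
  simp only [excessSlope]
  field_simp

theorem le_deriv_excessSlope {s d : ℝ} (hs : s ∈ Ioo (0 : ℝ) 1) (hd : HasDerivAt h d s)
    (hineq : -4 * P * (s - 1 / 2) - (3 * (2 * s - 1) / (s * (1 - s))) * h s
      + 6 * primitive h s ≤ d) :
    6 / (s * (1 - s)) ^ 3 * excess P h s ≤ deriv (excessSlope P h) s := by
  have hs₀ : 0 < s * (1 - s) := mul_pos hs.1 (sub_pos.2 hs.2)
  have hw {n : ℕ} : HasDerivAt (fun x : ℝ ↦ (x * (1 - x)) ^ n)
      (n * (s * (1 - s)) ^ (n - 1) * (1 - 2 * s)) s := by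
    refine (((hasDerivAt_id' s).fun_mul ((hasDerivAt_id' s).const_sub 1)).fun_pow n).congr_deriv
      (by ring)
  have hM : HasDerivAt (excessSlope P h) _ s := (hd.fun_div hw (pow_pos hs₀ 3).ne').fun_sub
    ((hasDerivAt_comparisonDeriv P (h (1 / 2)) s).fun_div hw (pow_pos hs₀ 2).ne')
  rw [hM.deriv, ← sub_nonneg]
  refine (div_nonneg (sub_nonneg.2 hineq) (pow_pos hs₀ 3).le).trans_eq ?_
  have : s ≠ 0 := hs.1.ne'
  have : 1 - s ≠ 0 := (sub_pos.2 hs.2).ne'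
  unfold excess comparison comparisonDeriv comparisonDeriv2
  field_simp
  ring

theorem excess_nonneg {t : ℝ} {L : NNReal} (ht₀ : 1 / 2 ≤ t) (ht : t < 1)
    (hh : LipschitzOnWith L h (Icc (1 / 2) t))
    (hderiv : ∀ᵐ s, s ∈ Ioc (1 / 2) t → -4 * P * (s - 1 / 2)
      - (3 * (2 * s - 1) / (s * (1 - s))) * h s + 6 * primitive h s ≤ deriv h s) :
    0 ≤ excess P h t := by
  have hcont := hh.continuousOn
  have hpos : ∀ s ∈ Icc (1 / 2 : ℝ) t, 0 < s * (1 - s) := fun _ ↦ mul_one_sub_pos_of_mem_Icc ht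
  have hc₂ : ContinuousOn (fun s : ℝ ↦ 6 / (s * (1 - s)) ^ 3) (Icc (1 / 2) t) :=
    continuousOn_const.div (by fun_prop) fun s hs ↦ (pow_pos (hpos s hs) 3).ne'
  have hslope : ∀ r ∈ Icc (1 / 2) t,
      ∫ s in (1 / 2)..r, 6 / (s * (1 - s)) ^ 3 * excess P h s ≤ excessSlope P h r := by
    intro r hr
    have hsub : Icc (1 / 2) r ⊆ Icc (1 / 2) t := Icc_subset_Icc_right hr.2
    have hM := (absolutelyContinuousOnInterval_excessSlope (P := P) ht₀ ht hh).mono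
      (by rw [uIcc_of_le hr.1, uIcc_of_le ht₀]; exact hsub)
    have hint :
        IntervalIntegrable (fun s ↦ 6 / (s * (1 - s)) ^ 3 * excess P h s) volume (1 / 2) r :=
      ((hc₂.mul (continuousOn_excess ht₀ ht hcont)).mono hsub).intervalIntegrable_of_Icc hr.1
    have := hM.integral_le_sub_of_le_deriv hr.1 hint ?_
    · rwa [excessSlope_half, sub_zero] at this
    filter_upwards [(uIcc_of_le ht₀ ▸ hh).absolutelyContinuousOnInterval.ae_differentiableAt,
      hderiv] with s hdiff hineq hs
    have hst : s ∈ Ioc (1 / 2) t := ⟨hs.1, hs.2.trans hr.2⟩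
    have hs' : s ∈ Icc (1 / 2) t := Ioc_subset_Icc_self hst
    exact le_deriv_excessSlope ⟨by linarith [hs.1], by linarith [hs'.2]⟩
      (hdiff (uIcc_of_le ht₀ ▸ hs')).hasDerivAt (hineq hst)
  exact (nonneg_of_coupled_le_integral (continuousOn_excess ht₀ ht hcont)
    (continuousOn_excessSlope ht hcont) (by fun_prop) hc₂ (fun _ _ ↦ by positivity)
    (fun s hs ↦ (div_pos (by norm_num) (pow_pos (hpos s hs) 3)).le)
    (fun r hr ↦ (excess_eq_integral hr.1 (hr.2.trans_lt ht) (hcont.mono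
      (Icc_subset_Icc_right hr.2))).ge) hslope t ⟨ht₀, le_rfl⟩).1

end VolumeComparison

open VolumeComparison

/-- Weighted volume comparison (analytic content of Lemma `vol-comp`):
if `h` is locally Lipschitz on `[1/2, 1)` and its a.e. derivative satisfies the
integro-differential inequality, then the weighted volume comparison holds. -/
theorem stmt0 (h : ℝ → ℝ)
    (hlip : ∀ a b : ℝ, 1/2 ≤ a → b < 1 → ∃ L : NNReal, LipschitzOnWith L h (Icc a b))
    (hderiv : ∀ᵐ t ∂volume, t ∈ Ioo (1/2 : ℝ) 1 →
      deriv h t ≥ -4 * Real.pi * (t - 1/2) - (3 * (2*t - 1) / (t * (1 - t))) * h t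
        + 6 * ∫ s in (1/2 : ℝ)..t, h s / (s * (1 - s))) :
    ∀ t ∈ Ioo (1/2 : ℝ) 1,
      (1/2) * t^2 - (1/3) * t^3 - 1/12
          - (1 / (4 * Real.pi)) * ∫ s in (1/2 : ℝ)..t, h s / (s * (1 - s))
        ≤ (2 * (1/4 - h (1/2) / Real.pi) / 3) * (3*t^2 - 3*t + 1)
          - (4 * (1/4 - h (1/2) / Real.pi) / 3) * (1 - t)^3 := by
  intro t ht
  obtain ⟨L, hL⟩ := hlip (1 / 2) t le_rfl ht.2
  have hexcess : 0 ≤ excess Real.pi h t := excess_nonneg ht.1.le ht.2 hL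
    (hderiv.mono fun s hs hst ↦ hs ⟨hst.1, hst.2.trans_lt ht.2⟩)
  have hπ := Real.pi_pos
  rw [← sub_nonneg]
  refine (div_nonneg hexcess (by positivity : (0 : ℝ) ≤ 4 * Real.pi)).trans_eq ?_
  unfold excess primitive comparison
  field_simp
  ring
end

section
/- Let w : [1/2, 1) → ℝ be C¹ with locally Lipschitz derivative, w(1/2) = 0, w'(1/2) = 0, and suppose that for almost every t ∈ (1/2, 1) the second derivative satisfies w''(t) + (2(2t−1)/(t(1−t)))·w'(t) − (6/(t(1−t)))·w(t) ≤ 0. Then w(t) ≤ 0 for all t ∈ [1/2, 1). -/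
open MeasureTheory Set

/-!
`U(t) = t² - t + 1/3` is a positive solution of `L U = 0`, and `p(t) = (t(1-t))⁻²` satisfies
`p' = (2(2t-1)/(t(1-t))) p`, so the weighted Wronskian `p (U w' - U' w)` has derivative
`p U (L w) ≤ 0` wherever `w'` is differentiable. Being absolutely continuous and zero at `1/2`,
it stays `≤ 0`; hence `(w / U)' = (U w' - U' w) / U² ≤ 0`, and `w / U` starts at `0`.
-/

theorem AbsolutelyContinuousOnInterval.le_of_ae_deriv_nonpos {f : ℝ → ℝ} {a b : ℝ}
    (hab : a ≤ b) (hf : AbsolutelyContinuousOnInterval f a b)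
    (hf' : ∀ᵐ x, x ∈ Ioo a b → deriv f x ≤ 0) : f b ≤ f a := by
  have : ∫ x in a..b, deriv f x ≤ 0 := by
    rw [intervalIntegral.integral_of_le hab, integral_Ioc_eq_integral_Ioo]
    exact setIntegral_nonpos_ae measurableSet_Ioo hf'
  linarith [hf.integral_deriv_eq_sub]

theorem Convex.exists_lipschitzOnWith_of_hasDerivWithinAt {f f' : ℝ → ℝ} {s : Set ℝ}
    (hs : Convex ℝ s) (hs' : IsCompact s) (hf : ∀ x ∈ s, HasDerivWithinAt f (f' x) s x)
    (hf' : ContinuousOn f' s) : ∃ K, LipschitzOnWith K f s := by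
  obtain ⟨C, hC⟩ := hs'.exists_bound_of_continuousOn hf'
  refine ⟨C.toNNReal, hs.lipschitzOnWith_of_nnnorm_hasDerivWithin_le hf fun x hx => ?_⟩
  rw [← NNReal.coe_le_coe, coe_nnnorm]
  exact (hC x hx).trans (Real.le_coe_toNNReal C)

theorem hasDerivAt_weight_mul_wronskian {p U U' w w' : ℝ → ℝ} {x b c U'' w'' : ℝ}
    (hp : HasDerivAt p (b * p x) x) (hU : HasDerivAt U (U' x) x) (hU' : HasDerivAt U' U'' x)
    (hw : HasDerivAt w (w' x) x) (hw' : HasDerivAt w' w'' x)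
    (hLU : U'' + b * U' x + c * U x = 0) :
    HasDerivAt (fun t => p t * (U t * w' t - U' t * w t))
      (p x * U x * (w'' + b * w' x + c * w x)) x := by
  refine (hp.fun_mul ((hU.fun_mul hw').fun_sub (hU'.fun_mul hw))).congr_deriv ?_
  linear_combination -(p x * w x) * hLU

noncomputable def integratingFactor (t : ℝ) : ℝ := ((t * (1 - t)) ^ 2)⁻¹

noncomputable def positiveSolution (t : ℝ) : ℝ := t ^ 2 - t + 1 / 3

theorem positiveSolution_pos (t : ℝ) : 0 < positiveSolution t := by
  unfold positiveSolution
  nlinarith [sq_nonneg (t - 1 / 2)]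

theorem hasDerivAt_positiveSolution (x : ℝ) : HasDerivAt positiveSolution (2 * x - 1) x := by
  unfold positiveSolution
  refine (((hasDerivAt_pow 2 x).fun_sub (hasDerivAt_id' x)).add_const (1 / 3 : ℝ)).congr_deriv ?_
  ring

theorem hasDerivAt_two_mul_sub_one (x : ℝ) : HasDerivAt (fun t : ℝ => 2 * t - 1) 2 x := by
  simpa using ((hasDerivAt_id x).const_mul (2 : ℝ)).sub_const 1

theorem hasDerivAt_integratingFactor {x : ℝ} (hx : x * (1 - x) ≠ 0) :
    HasDerivAt integratingFactor (2 * (2 * x - 1) / (x * (1 - x)) * integratingFactor x) x := by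
  have hq : HasDerivAt (fun t : ℝ => (t * (1 - t)) ^ 2) (2 * (x * (1 - x)) * (1 - 2 * x)) x := by
    refine (((hasDerivAt_id' x).fun_mul ((hasDerivAt_const x (1 : ℝ)).fun_sub
      (hasDerivAt_id' x))).pow 2).congr_deriv ?_
    ring
  refine (hq.inv (pow_ne_zero 2 hx)).congr_deriv ?_
  obtain ⟨hx0, hx1⟩ := mul_ne_zero_iff.1 hx
  unfold integratingFactor
  field_simp
  ring

theorem positiveSolution_solves {x : ℝ} (hx : x * (1 - x) ≠ 0) :
    2 + 2 * (2 * x - 1) / (x * (1 - x)) * (2 * x - 1) + -(6 / (x * (1 - x))) * positiveSolution x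
      = 0 := by
  obtain ⟨hx0, hx1⟩ := mul_ne_zero_iff.1 hx
  unfold positiveSolution
  field_simp
  ring

noncomputable def weightedWronskian (w w' : ℝ → ℝ) (t : ℝ) : ℝ :=
  integratingFactor t * (positiveSolution t * w' t - (2 * t - 1) * w t)

theorem mul_one_sub_ne_zero {x : ℝ} (hx : x ∈ Ioo (0 : ℝ) 1) : x * (1 - x) ≠ 0 :=
  mul_ne_zero hx.1.ne' (sub_ne_zero.2 hx.2.ne')

theorem hasDerivAt_weightedWronskian {w w' : ℝ → ℝ} {x w'' : ℝ} (hx : x ∈ Ioo (0 : ℝ) 1)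
    (hw : HasDerivAt w (w' x) x) (hw' : HasDerivAt w' w'' x) :
    HasDerivAt (weightedWronskian w w') (integratingFactor x * positiveSolution x *
      (w'' + 2 * (2 * x - 1) / (x * (1 - x)) * w' x + -(6 / (x * (1 - x))) * w x)) x :=
  hasDerivAt_weight_mul_wronskian (U' := fun t => 2 * t - 1)
    (hasDerivAt_integratingFactor (mul_one_sub_ne_zero hx)) (hasDerivAt_positiveSolution x)
    (hasDerivAt_two_mul_sub_one x) hw hw' (positiveSolution_solves (mul_one_sub_ne_zero hx))

theorem AbsolutelyContinuousOnInterval.weightedWronskian {w w' : ℝ → ℝ} {a b : ℝ}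
    (hab : uIcc a b ⊆ Ioo 0 1) (hw : AbsolutelyContinuousOnInterval w a b)
    (hw' : AbsolutelyContinuousOnInterval w' a b) :
    AbsolutelyContinuousOnInterval (weightedWronskian w w') a b := by
  have hfactor : AbsolutelyContinuousOnInterval integratingFactor a b :=
    ContDiffOn.absolutelyContinuousOnInterval <| ContDiffOn.inv (by fun_prop) fun y hy =>
      pow_ne_zero 2 (mul_one_sub_ne_zero (hab hy))
  have hU : AbsolutelyContinuousOnInterval positiveSolution a b :=
    ContDiffOn.absolutelyContinuousOnInterval (by unfold positiveSolution; fun_prop)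
  have hU' : AbsolutelyContinuousOnInterval (fun t : ℝ => 2 * t - 1) a b :=
    ContDiffOn.absolutelyContinuousOnInterval (by fun_prop)
  exact hfactor.fun_mul ((hU.fun_mul hw').fun_sub (hU'.fun_mul hw))

theorem weightedWronskian_nonpos {w w' : ℝ → ℝ}
    (hderivw : ∀ t ∈ Ico (1/2 : ℝ) 1, HasDerivWithinAt w (w' t) (Ico (1/2 : ℝ) 1) t)
    (hlip : ∀ a b : ℝ, 1/2 ≤ a → b < 1 → ∃ L : NNReal, LipschitzOnWith L w' (Icc a b))
    (hw0 : w (1/2) = 0) (hw'0 : w' (1/2) = 0)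
    (hineq : ∀ᵐ t ∂volume, t ∈ Ioo (1/2 : ℝ) 1 →
      deriv w' t + (2*(2*t-1)/(t*(1-t))) * w' t - (6/(t*(1-t))) * w t ≤ 0)
    {x : ℝ} (hx : x ∈ Ico (1/2 : ℝ) 1) :
    weightedWronskian w w' x ≤ 0 := by
  have hsub : uIcc (1/2 : ℝ) x ⊆ Ico (1/2) 1 := uIcc_of_le hx.1 ▸ Icc_subset_Ico_right hx.2
  obtain ⟨K, hw'⟩ := hlip (1/2) x le_rfl hx.2
  rw [← uIcc_of_le hx.1] at hw'
  obtain ⟨K', hw⟩ := (convex_uIcc _ _).exists_lipschitzOnWith_of_hasDerivWithinAt isCompact_uIcc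
    (fun y hy => (hderivw y (hsub hy)).mono hsub) hw'.continuousOn
  have hderiv : ∀ᵐ y, y ∈ Ioo (1/2) x → deriv (weightedWronskian w w') y ≤ 0 := by
    filter_upwards [hineq, hw'.absolutelyContinuousOnInterval.ae_differentiableAt]
      with y hLy hw'y hy
    have hy1 : y ∈ Ioo (1/2 : ℝ) 1 := ⟨hy.1, hy.2.trans hx.2⟩
    rw [(hasDerivAt_weightedWronskian ⟨by linarith [hy1.1], hy1.2⟩
      ((hderivw y (Ioo_subset_Ico_self hy1)).hasDerivAt (Ico_mem_nhds hy1.1 hy1.2))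
      (hw'y (uIcc_of_le hx.1 ▸ Ioo_subset_Icc_self hy)).hasDerivAt).deriv]
    have hL := hLy hy1
    exact mul_nonpos_of_nonneg_of_nonpos
      (mul_nonneg (inv_nonneg.2 (sq_nonneg _)) (positiveSolution_pos y).le) (by linarith)
  have hmono := (hw.absolutelyContinuousOnInterval.weightedWronskian
    (fun y hy => ⟨by linarith [(hsub hy).1], (hsub hy).2⟩)
    hw'.absolutelyContinuousOnInterval).le_of_ae_deriv_nonpos hx.1 hderiv
  have hstart : weightedWronskian w w' (1/2) = 0 := by
    rw [weightedWronskian, hw0, hw'0]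
    ring
  exact hmono.trans_eq hstart

theorem antitoneOn_div_positiveSolution {w w' : ℝ → ℝ}
    (hderivw : ∀ t ∈ Ico (1/2 : ℝ) 1, HasDerivWithinAt w (w' t) (Ico (1/2 : ℝ) 1) t)
    (hV : ∀ x ∈ Ioo (1/2 : ℝ) 1, weightedWronskian w w' x ≤ 0) :
    AntitoneOn (fun t => w t / positiveSolution t) (Ico (1/2) 1) := by
  refine antitoneOn_of_hasDerivWithinAt_nonpos (convex_Ico _ _)
    (f' := fun x => (w' x * positiveSolution x - w x * (2 * x - 1)) / positiveSolution x ^ 2)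
    (ContinuousOn.div (fun x hx => (hderivw x hx).continuousWithinAt)
      (fun x _ => (hasDerivAt_positiveSolution x).continuousAt.continuousWithinAt)
      fun x _ => (positiveSolution_pos x).ne')
    (fun x hx => ?_) (fun x hx => ?_) <;> rw [interior_Ico] at hx
  · exact (((hderivw x (Ioo_subset_Ico_self hx)).hasDerivAt (Ico_mem_nhds hx.1 hx.2)).div
      (hasDerivAt_positiveSolution x) (positiveSolution_pos x).ne').hasDerivWithinAt
  · have hfactor : 0 < integratingFactor x :=
      inv_pos.2 (pow_pos (mul_pos (by linarith [hx.1]) (by linarith [hx.2])) 2)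
    have hV' := nonpos_of_mul_nonpos_right (hV x hx) hfactor
    exact div_nonpos_of_nonpos_of_nonneg (by linarith) (sq_nonneg _)

/-- ODE comparison principle: if `w` is `C¹` on `[1/2, 1)` with locally Lipschitz
derivative `w'`, `w(1/2) = 0`, `w'(1/2) = 0`, and a.e.
`w'' + (2(2t-1)/(t(1-t)))·w' - (6/(t(1-t)))·w ≤ 0`, then `w ≤ 0` on `[1/2, 1)`. -/
theorem stmt2 (w w' : ℝ → ℝ)
    (hderivw : ∀ t ∈ Ico (1/2 : ℝ) 1, HasDerivWithinAt w (w' t) (Ico (1/2 : ℝ) 1) t)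
    (hlip : ∀ a b : ℝ, 1/2 ≤ a → b < 1 → ∃ L : NNReal, LipschitzOnWith L w' (Icc a b))
    (hw0 : w (1/2) = 0) (hw'0 : w' (1/2) = 0)
    (hineq : ∀ᵐ t ∂volume, t ∈ Ioo (1/2 : ℝ) 1 →
      deriv w' t + (2*(2*t-1)/(t*(1-t))) * w' t - (6/(t*(1-t))) * w t ≤ 0) :
    ∀ t ∈ Ico (1/2 : ℝ) 1, w t ≤ 0 := by
  intro t ht
  have hanti := antitoneOn_div_positiveSolution hderivw fun x hx =>
    weightedWronskian_nonpos hderivw hlip hw0 hw'0 hineq (Ioo_subset_Ico_self hx)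
  have h : w t / positiveSolution t ≤ w (1/2) / positiveSolution (1/2) :=
    hanti (left_mem_Ico.2 (by norm_num)) ht ht.1
  rw [hw0, zero_div] at h
  simpa using (div_le_iff₀ (positiveSolution_pos t)).1 h
end

section
/- Let a, α₁, α₂ ∈ ℝ and define U : (1/2, 1) → ℝ by U(t) = −(a/18)·(6t³·log((1−t)/t) + 6t² + 3t − 1) + α₁·(3t² − 3t + 1) + α₂·(1−t)³. Then for every t ∈ (1/2, 1): U''(t) + (2(2t−1)/(t(1−t)))·U'(t) − (6/(t(1−t)))·U(t) = a/(1−t)². Moreover U extends to a C² function on [1/2, 1) with U(1/2) = −a/9 + α₁/4 + α₂/8 and U'(1/2) = −a/3 − (3/4)·α₂. -/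
/-!
Both `t³` and `(1 - t)³` solve the homogeneous equation (and `3t² - 3t + 1 = t³ + (1 - t)³`), so
the particular solution is of the form `t³ · log((1 - t)/t) + (polynomial)`: because `t³` is
annihilated by the operator, the logarithm enters the equation only through its derivative
`-1/(t(1 - t))`, and the identity reduces to rational-function arithmetic.
-/

open Set

theorem deriv_deriv_eq_of_hasDerivAt {𝕜 F : Type*} [NontriviallyNormedField 𝕜]
    [NormedAddCommGroup F] [NormedSpace 𝕜 F] {f f' f'' : 𝕜 → F} {s : Set 𝕜} (hs : IsOpen s)
    (hf : ∀ x ∈ s, HasDerivAt f (f' x) x) (hf' : ∀ x ∈ s, HasDerivAt f' (f'' x) x)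
    {x : 𝕜} (hx : x ∈ s) : deriv (deriv f) x = f'' x := by
  have : deriv f =ᶠ[nhds x] f' :=
    Filter.eventually_of_mem (hs.mem_nhds hx) fun y hy => (hf y hy).deriv
  rw [this.deriv_eq, (hf' x hx).deriv]

theorem hasDerivAt_log_one_sub_div_self {t : ℝ} (ht : t ∈ Ioo (0 : ℝ) 1) :
    HasDerivAt (fun t => Real.log ((1 - t) / t)) (-1 / (t * (1 - t))) t := by
  have h0 : t ≠ 0 := ht.1.ne'
  have h1 : 1 - t ≠ 0 := (sub_pos.2 ht.2).ne'
  convert (((hasDerivAt_id' t).const_sub 1).fun_div (hasDerivAt_id' t) h0).log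
    (div_ne_zero h1 h0) using 1
  field_simp
  ring

noncomputable def comparisonSolution (a α₁ α₂ t : ℝ) : ℝ :=
  -(a/18) * (6*t^3 * Real.log ((1-t)/t) + 6*t^2 + 3*t - 1)
    + α₁ * (3*t^2 - 3*t + 1) + α₂ * (1-t)^3

noncomputable def comparisonSolutionDeriv (a α₁ α₂ t : ℝ) : ℝ :=
  -(a/18) * (18*t^2 * Real.log ((1-t)/t) - 6*t^2/(1-t) + 12*t + 3)
    + α₁ * (6*t - 3) - 3*α₂ * (1-t)^2

section

variable (a α₁ α₂ : ℝ) {t : ℝ}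

theorem hasDerivAt_comparisonSolution (ht : t ∈ Ioo (0 : ℝ) 1) :
    HasDerivAt (comparisonSolution a α₁ α₂) (comparisonSolutionDeriv a α₁ α₂ t) t := by
  have h1 : 1 - t ≠ 0 := (sub_pos.2 ht.2).ne'
  have hX := hasDerivAt_id' t
  have hP : ∀ n : ℕ, HasDerivAt (fun t : ℝ => t ^ n) _ t := fun n => hasDerivAt_pow n t
  have hPart := (((((hP 3).const_mul 6).fun_mul (hasDerivAt_log_one_sub_div_self ht)).fun_add
    ((hP 2).const_mul 6)).fun_add (hX.const_mul 3)).sub_const 1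
  have hHom₁ := (((hP 2).const_mul 3).fun_sub (hX.const_mul 3)).add_const 1
  have hHom₂ := (hX.const_sub 1).fun_pow 3
  refine (((hPart.const_mul (-(a/18))).fun_add (hHom₁.const_mul α₁)).fun_add
    (hHom₂.const_mul α₂)).congr_deriv ?_
  unfold comparisonSolutionDeriv
  field_simp
  ring

theorem hasDerivAt_comparisonSolutionDeriv (ht : t ∈ Ioo (0 : ℝ) 1) :
    HasDerivAt (comparisonSolutionDeriv a α₁ α₂)
      (-(a/18) * (36*t * Real.log ((1-t)/t) - 18*t/(1-t) - (12*t - 6*t^2)/(1-t)^2 + 12)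
        + 6*α₁ + 6*α₂*(1-t)) t := by
  have h1 : 1 - t ≠ 0 := (sub_pos.2 ht.2).ne'
  have hX := hasDerivAt_id' t
  have hP : ∀ n : ℕ, HasDerivAt (fun t : ℝ => t ^ n) _ t := fun n => hasDerivAt_pow n t
  have hPart := (((((hP 2).const_mul 18).fun_mul (hasDerivAt_log_one_sub_div_self ht)).fun_sub
    (((hP 2).const_mul 6).fun_div (hX.const_sub 1) h1)).fun_add (hX.const_mul 12)).add_const 3
  have hHom₁ := (hX.const_mul 6).sub_const 3
  have hHom₂ := (hX.const_sub 1).fun_pow 2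
  refine (((hPart.const_mul (-(a/18))).fun_add (hHom₁.const_mul α₁)).fun_sub
    (hHom₂.const_mul (3*α₂))).congr_deriv ?_
  field_simp
  ring

theorem contDiffOn_comparisonSolution {n : WithTop ℕ∞} :
    ContDiffOn ℝ n (comparisonSolution a α₁ α₂) (Ioo 0 1) := by
  have hlog : ContDiffOn ℝ n (fun t : ℝ => Real.log ((1-t)/t)) (Ioo 0 1) :=
    ContDiffOn.log (by fun_prop (disch := exact fun t ht => ht.1.ne'))
      fun t ht => (div_pos (sub_pos.2 ht.2) ht.1).ne'
  unfold comparisonSolution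
  fun_prop

theorem comparisonSolution_ode (ht : t ∈ Ioo (0 : ℝ) 1) :
    deriv (deriv (comparisonSolution a α₁ α₂)) t
        + (2*(2*t-1)/(t*(1-t))) * deriv (comparisonSolution a α₁ α₂) t
        - (6/(t*(1-t))) * comparisonSolution a α₁ α₂ t = a/(1-t)^2 := by
  have h0 : t ≠ 0 := ht.1.ne'
  have h1 : 1 - t ≠ 0 := (sub_pos.2 ht.2).ne'
  rw [deriv_deriv_eq_of_hasDerivAt isOpen_Ioo (fun s hs => hasDerivAt_comparisonSolution a α₁ α₂ hs)
    (fun s hs => hasDerivAt_comparisonSolutionDeriv a α₁ α₂ hs) ht,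
    (hasDerivAt_comparisonSolution a α₁ α₂ ht).deriv]
  unfold comparisonSolution comparisonSolutionDeriv
  field_simp
  ring

end

/-- The general solution of the comparison ODE (equation `comparison-eq`):
`U(t) = -(a/18)(6t³ log((1-t)/t) + 6t² + 3t - 1) + α₁(3t² - 3t + 1) + α₂(1-t)³`
satisfies `U'' + (2(2t-1)/(t(1-t)))·U' - (6/(t(1-t)))·U = a/(1-t)²` on `(1/2, 1)`,
is `C²` on `[1/2, 1)`, and has the stated initial values at `t = 1/2`. -/
theorem stmt3 (a α₁ α₂ : ℝ) (U : ℝ → ℝ)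
    (hU : ∀ t, U t = -(a/18) * (6*t^3 * Real.log ((1-t)/t) + 6*t^2 + 3*t - 1)
        + α₁ * (3*t^2 - 3*t + 1) + α₂ * (1-t)^3) :
    (∀ t ∈ Ioo (1/2 : ℝ) 1,
      deriv (deriv U) t + (2*(2*t-1)/(t*(1-t))) * deriv U t - (6/(t*(1-t))) * U t
        = a/(1-t)^2) ∧
    ContDiffOn ℝ 2 U (Ico (1/2 : ℝ) 1) ∧
    U (1/2) = -a/9 + α₁/4 + α₂/8 ∧
    deriv U (1/2) = -a/3 - (3/4) * α₂ := by
  obtain rfl : U = comparisonSolution a α₁ α₂ := funext hU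
  have hIco : Ico (1/2 : ℝ) 1 ⊆ Ioo 0 1 := Ico_subset_Ioo_left (by norm_num)
  have hhalf : (1/2 : ℝ) ∈ Ioo 0 1 := hIco (left_mem_Ico.2 (by norm_num))
  refine ⟨fun t ht => comparisonSolution_ode a α₁ α₂ (hIco (Ioo_subset_Ico_self ht)),
    (contDiffOn_comparisonSolution a α₁ α₂).mono hIco, ?_, ?_⟩
  · norm_num [comparisonSolution]
    ring
  · rw [(hasDerivAt_comparisonSolution a α₁ α₂ hhalf).deriv]
    norm_num [comparisonSolutionDeriv]
    ring
end

section
/- Let m > 0, let U ⊆ ℝ³ be open, and let f : U → ℝ be a smooth function with 0 < f(x) < 1 for all x ∈ U. Define G : (0,1) → ℝ by G(s) = (m/2)·(1/(1−s) − 1/s) + m·log(s/(1−s)) and set ρ := G ∘ f on U. Then at every point x ∈ U with ∇f(x) ≠ 0, writing ν = ∇f/|∇f|, u = m/(2f(1−f)) and u' = 2f − 1 (all evaluated at x), the Hessian matrices satisfy: Hess f − f⁻¹(1−f)⁻¹(2f−1)·|∇f|²·(I − 3ννᵀ) = (m/(2u²))·( Hess ρ − (u'/u)·|∇ρ|²·(I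 − ννᵀ) ). -/
/-- The Euclidean Hessian matrix of `φ : ℝ³ → ℝ` at `x`. -/
noncomputable def eucHess (φ : EuclideanSpace ℝ (Fin 3) → ℝ)
    (x : EuclideanSpace ℝ (Fin 3)) (i j : Fin 3) : ℝ :=
  iteratedFDeriv ℝ 2 φ x ![EuclideanSpace.single i (1 : ℝ), EuclideanSpace.single j (1 : ℝ)]

private lemma grad_coord (φ : EuclideanSpace ℝ (Fin 3) → ℝ) (x : EuclideanSpace ℝ (Fin 3))
    (i : Fin 3) : gradient φ x i = fderiv ℝ φ x (EuclideanSpace.single i 1) := by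
  have h : fderiv ℝ φ x = InnerProductSpace.toDual ℝ _ (gradient φ x) :=
    ((InnerProductSpace.toDual ℝ _).apply_symm_apply _).symm
  rw [h, InnerProductSpace.toDual_apply_apply, EuclideanSpace.inner_single_right]
  simp

private lemma hasDerivAt_G0 (m s : ℝ) (hs0 : 0 < s) (hs1 : s < 1) :
    HasDerivAt (fun s : ℝ => (m/2) * (1/(1-s) - 1/s) + m * Real.log (s/(1-s)))
      (m/(2*s^2*(1-s)^2)) s := by
  have h1s : (1:ℝ) - s ≠ 0 := by linarith
  have hs : s ≠ 0 := hs0.ne'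
  have h1 : HasDerivAt (fun s : ℝ => 1 - s) (-1) s := by
    simpa using (hasDerivAt_id s).const_sub 1
  have hinv1 : HasDerivAt (fun s : ℝ => (1-s)⁻¹) (-(-1)/(1-s)^2) s := h1.inv h1s
  have hinv2 : HasDerivAt (fun s : ℝ => s⁻¹) (-1/s^2) s := by
    simpa using (hasDerivAt_id' s).fun_inv hs
  have hdiv : HasDerivAt (fun s : ℝ => s/(1-s)) ((1*(1-s) - s*(-1))/(1-s)^2) s :=
    (hasDerivAt_id s).div h1 h1s
  have hlog := hdiv.log (div_ne_zero hs h1s)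
  have := ((hinv1.fun_sub hinv2).const_mul (m/2)).fun_add (hlog.const_mul m)
  refine HasDerivAt.congr_deriv (this.congr_of_eventuallyEq (Filter.Eventually.of_forall fun t => by simp [one_div])) ?_
  · field_simp
    ring

private lemma hasDerivAt_g0 (m s : ℝ) (hs0 : 0 < s) (hs1 : s < 1) :
    HasDerivAt (fun s : ℝ => m/(2*s^2*(1-s)^2)) (m*(2*s-1)/(s^3*(1-s)^3)) s := by
  have h1s : (1:ℝ) - s ≠ 0 := by linarith
  have hs : s ≠ 0 := hs0.ne'
  have h1 : HasDerivAt (fun s : ℝ => 1 - s) (-1) s := by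
    simpa using (hasDerivAt_id s).const_sub 1
  have hp1 : HasDerivAt (fun s : ℝ => s^2) (2*s) s := by
    simpa using hasDerivAt_pow 2 s
  have hp2 : HasDerivAt (fun s : ℝ => (1-s)^2) ((2:ℕ)*(1-s)^1*(-1)) s := h1.pow 2
  have hD : HasDerivAt (fun s : ℝ => 2*s^2*(1-s)^2)
      ((2*(2*s))*(1-s)^2 + 2*s^2*((2:ℕ)*(1-s)^1*(-1))) s := by
    simpa [mul_assoc] using ((hp1.const_mul 2).fun_mul hp2)
  have hDne : 2*s^2*(1-s)^2 ≠ 0 := by positivity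
  have := (hasDerivAt_const s m).fun_div hD hDne
  refine HasDerivAt.congr_deriv this ?_
  field_simp
  ring

/-- The chain-rule tensor identity relating the tensor `𝒯` built from `f` to the Hessian
of `ρ = G ∘ f` (used to pass from Proposition 4.1 to equation `rho-prop`): at every
point where `∇f ≠ 0`, with `ν = ∇f/|∇f|`, `u = m/(2f(1-f))` and `u' = 2f - 1`,
`Hess f - f⁻¹(1-f)⁻¹(2f-1)|∇f|²(I - 3ννᵀ)
  = (m/(2u²))(Hess ρ - (u'/u)|∇ρ|²(I - ννᵀ))`. -/
theorem stmt10 (m : ℝ) (hm : 0 < m)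
    (U : Set (EuclideanSpace ℝ (Fin 3))) (hU : IsOpen U)
    (f : EuclideanSpace ℝ (Fin 3) → ℝ) (hf : ContDiffOn ℝ (⊤ : ℕ∞) f U)
    (hf0 : ∀ x ∈ U, 0 < f x) (hf1 : ∀ x ∈ U, f x < 1)
    (G : ℝ → ℝ) (hG : ∀ s, G s = (m/2) * (1/(1-s) - 1/s) + m * Real.log (s/(1-s)))
    (ρ : EuclideanSpace ℝ (Fin 3) → ℝ) (hρ : ∀ x, ρ x = G (f x)) :
    ∀ x ∈ U, gradient f x ≠ 0 → ∀ i j : Fin 3,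
      eucHess f x i j - (f x)⁻¹ * (1 - f x)⁻¹ * (2 * f x - 1) * ‖gradient f x‖^2 *
          ((if i = j then (1 : ℝ) else 0)
            - 3 * (gradient f x i / ‖gradient f x‖) * (gradient f x j / ‖gradient f x‖))
        = (m / (2 * (m / (2 * f x * (1 - f x)))^2)) *
          (eucHess ρ x i j
            - ((2 * f x - 1) / (m / (2 * f x * (1 - f x)))) * ‖gradient ρ x‖^2 *
              ((if i = j then (1 : ℝ) else 0)
                - (gradient f x i / ‖gradient f x‖) * (gradient f x j / ‖gradient f x‖))) := by
  intro x hx hgrad i j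
  set gd : ℝ → ℝ := fun s => m/(2*s^2*(1-s)^2) with hgd
  set hd : ℝ → ℝ := fun s => m*(2*s-1)/(s^3*(1-s)^3) with hhd
  have hGfun : G = fun s : ℝ => (m/2) * (1/(1-s) - 1/s) + m * Real.log (s/(1-s)) := funext hG
  have hρfun : ρ = fun y => G (f y) := funext hρ
  have hGder : ∀ s : ℝ, 0 < s → s < 1 → HasDerivAt G (gd s) s := by
    intro s hs0 hs1
    rw [hGfun]
    exact hasDerivAt_G0 m s hs0 hs1
  -- first derivative of ρ on U
  have hρder : ∀ y ∈ U, HasFDerivAt ρ (gd (f y) • fderiv ℝ f y) y := by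
    intro y hy
    have hfd : DifferentiableAt ℝ f y :=
      (hf.contDiffAt (hU.mem_nhds hy)).differentiableAt (by simp)
    rw [hρfun]
    exact (hGder (f y) (hf0 y hy) (hf1 y hy)).comp_hasFDerivAt y hfd.hasFDerivAt
  have hfa : ContDiffAt ℝ (⊤ : ℕ∞) f x := hf.contDiffAt (hU.mem_nhds hx)
  have hfd : DifferentiableAt ℝ f x := hfa.differentiableAt (by simp)
  have hfd2 : DifferentiableAt ℝ (fderiv ℝ f) x :=
    (hfa.fderiv_right (m := 1) (by exact WithTop.coe_le_coe.mpr le_top)).differentiableAt one_ne_zero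
  -- gradient of ρ
  have hgradρ : gradient ρ x = gd (f x) • gradient f x := by
    unfold gradient
    rw [(hρder x hx).fderiv]
    simp
  -- second derivative of ρ
  have hc : HasFDerivAt (fun y => gd (f y)) (hd (f x) • fderiv ℝ f x) x :=
    (hasDerivAt_g0 m (f x) (hf0 x hx) (hf1 x hx)).comp_hasFDerivAt x hfd.hasFDerivAt
  have hsm : HasFDerivAt (fun y => gd (f y) • fderiv ℝ f y)
      (gd (f x) • fderiv ℝ (fderiv ℝ f) x +
        (hd (f x) • fderiv ℝ f x).smulRight (fderiv ℝ f x)) x :=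
    hc.smul hfd2.hasFDerivAt
  have heq : fderiv ℝ ρ =ᶠ[nhds x] (fun y => gd (f y) • fderiv ℝ f y) := by
    filter_upwards [hU.mem_nhds hx] with y hy
    exact (hρder y hy).fderiv
  have hfρ2 : fderiv ℝ (fderiv ℝ ρ) x =
      gd (f x) • fderiv ℝ (fderiv ℝ f) x +
        (hd (f x) • fderiv ℝ f x).smulRight (fderiv ℝ f x) := by
    rw [heq.fderiv_eq]
    exact hsm.fderiv
  -- abbreviations
  set ei := EuclideanSpace.single i (1:ℝ)
  set ej := EuclideanSpace.single j (1:ℝ)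
  have hHf : eucHess f x i j = fderiv ℝ (fderiv ℝ f) x ei ej := by
    rw [eucHess, iteratedFDeriv_two_apply]
    simp [ei, ej]
  have hHρ : eucHess ρ x i j =
      gd (f x) * fderiv ℝ (fderiv ℝ f) x ei ej + hd (f x) * (fderiv ℝ f x ei) * (fderiv ℝ f x ej) := by
    rw [eucHess, iteratedFDeriv_two_apply]
    simp only [Matrix.cons_val_zero, Matrix.cons_val_one, Matrix.head_cons, hfρ2]
    simp [mul_assoc, mul_comm, ei, ej]
  have hgi : gradient f x i = fderiv ℝ f x ei := grad_coord f x i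
  have hgj : gradient f x j = fderiv ℝ f x ej := grad_coord f x j
  have hnormρ : ‖gradient ρ x‖^2 = (gd (f x))^2 * ‖gradient f x‖^2 := by
    rw [hgradρ, norm_smul]
    rw [mul_pow, Real.norm_eq_abs, sq_abs]
  -- nonvanishing facts
  have ha0 : f x ≠ 0 := (hf0 x hx).ne'
  have ha1 : (1:ℝ) - f x ≠ 0 := by have := hf1 x hx; linarith
  have hN : ‖gradient f x‖ ≠ 0 := norm_ne_zero_iff.mpr hgrad
  -- final algebra
  rw [hHf, hHρ, hgi, hgj, hnormρ, hgd, hhd]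
  set a := f x
  set N := ‖gradient f x‖
  set Fi := fderiv ℝ f x ei
  set Fj := fderiv ℝ f x ej
  set H := fderiv ℝ (fderiv ℝ f) x ei ej
  set d : ℝ := if i = j then (1:ℝ) else 0
  have ha0' : a ≠ 0 := ha0
  have ha1' : (1:ℝ) - a ≠ 0 := ha1
  have hN' : N ≠ 0 := hN
  have hm' : m ≠ 0 := hm.ne'
  clear_value a N Fi Fj H d
  clear * - ha0' ha1' hN' hm'
  field_simp
  ring
end

section
/- Let m > 0. For r ≥ m define ρ_m(r) = r − m²/(4r) + m·log(2r/m). Then for every r ≥ m: ρ_m(r) > 0 and ρ_m(r) − m·log(2·ρ_m(r)/m) ≤ r ≤ ρ_m(r). -/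
/-- The two-sided estimate (equation `rho-vs-x`) comparing the Schwarzschild distance
to the horizon `ρ_m(r) = r - m²/(4r) + m log(2r/m)` with the isotropic radius `r`,
valid for `r ≥ m`: `ρ_m(r) > 0` and `ρ_m(r) - m log(2ρ_m(r)/m) ≤ r ≤ ρ_m(r)`. -/
theorem stmt13 (m : ℝ) (hm : 0 < m) (ρ : ℝ → ℝ)
    (hρ : ∀ r, ρ r = r - m^2/(4*r) + m * Real.log (2*r/m)) :
    ∀ r, m ≤ r →
      0 < ρ r ∧ ρ r - m * Real.log (2 * ρ r / m) ≤ r ∧ r ≤ ρ r := by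
  intro r hr
  have hr0 : 0 < r := lt_of_lt_of_le hm hr
  have h2 : (2:ℝ) ≤ 2*r/m := by
    rw [le_div_iff₀ hm]; nlinarith
  have hlog2 : Real.log 2 ≤ Real.log (2*r/m) :=
    Real.log_le_log (by norm_num) h2
  have hlog2q : (1:ℝ)/4 ≤ Real.log 2 := by
    nlinarith [Real.log_two_gt_d9]
  -- m^2/(4r) ≤ m/4 ≤ m * log 2 ≤ m * log(2r/m)
  have hfrac : m^2/(4*r) ≤ m/4 := by
    rw [div_le_div_iff₀ (by linarith) (by norm_num)]; nlinarith
  have hkey : m^2/(4*r) ≤ m * Real.log (2*r/m) := by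
    have : m/4 ≤ m * Real.log (2*r/m) := by nlinarith
    linarith
  have hle : r ≤ ρ r := by rw [hρ]; linarith
  have hρpos : 0 < ρ r := lt_of_lt_of_le hr0 hle
  refine ⟨hρpos, ?_, hle⟩
  have hmono : Real.log (2*r/m) ≤ Real.log (2 * ρ r / m) := by
    apply Real.log_le_log (by positivity)
    apply div_le_div_of_nonneg_right ?_ hm.le
    linarith
  have : ρ r - m * Real.log (2 * ρ r / m) ≤ ρ r - m * Real.log (2*r/m) := by
    nlinarith
  have h2' : ρ r - m * Real.log (2*r/m) = r - m^2/(4*r) := by rw [hρ]; ring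
  nlinarith [div_nonneg (sq_nonneg m) (by linarith : (0:ℝ) ≤ 4*r)]
end
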